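/- For all x, y, x̂, ŷ ∈ ℝ, |tanh(x̂)·σ(ŷ) − tanh(x)·σ(y)|² ≤ (17/16)·((x̂ − x)² + (ŷ − y)²); i.e., the function G(x,y) = tanh(x)·σ(y) is Lipschitz continuous on ℝ² with Lipschitz constant √(17/16) with respect to the Euclidean norm. -/

import Mathlib

/-! Writing `tanh x = 2 σ(2x) - 1`, the single derivative bound `σ' = σ (1 - σ) ≤ 1/4` makes `σ`
`1/4`-Lipschitz and `tanh` `1`-Lipschitz; both are bounded by `1` in absolute value. Splitting
`tanh x̂ σ(ŷ) - tanh x σ(y) = tanh x̂ (σ(ŷ) - σ(y)) + σ(y) (tanh x̂ - tanh x)` then bounds the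
difference by `|x̂ - x| + |ŷ - y| / 4`, and Cauchy–Schwarz against the vector `(1, 1/4)` squares
this to `(1 + 1/16) ((x̂ - x)² + (ŷ - y)²)`. -/

noncomputable def sigmoid (x : ℝ) : ℝ := 1 / (1 + Real.exp (-x))

open scoped NNReal

namespace Real

lemma sigmoid_mul_one_sub_sigmoid_le (x : ℝ) : sigmoid x * (1 - sigmoid x) ≤ 4⁻¹ := by
  nlinarith [sq_nonneg (2 * sigmoid x - 1)]

lemma lipschitzWith_sigmoid : LipschitzWith 4⁻¹ sigmoid := by
  refine lipschitzWith_of_nnnorm_deriv_le differentiable_sigmoid fun x ↦ ?_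
  rw [← NNReal.coe_le_coe, coe_nnnorm, deriv_sigmoid, norm_of_nonneg
    (mul_nonneg (sigmoid_nonneg x) (sub_nonneg.2 (sigmoid_le_one x)))]
  simpa using sigmoid_mul_one_sub_sigmoid_le x

lemma tanh_eq_two_mul_sigmoid_sub_one (x : ℝ) : tanh x = 2 * sigmoid (2 * x) - 1 := by
  have h : exp (-(2 * x)) = exp (-x) ^ 2 := by rw [← exp_nat_mul]; ring_nf
  rw [tanh_eq_sinh_div_cosh, sinh_eq, cosh_eq, sigmoid_def, h]
  have hinv : exp x * exp (-x) = 1 := by rw [← exp_add, add_neg_cancel, exp_zero]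
  field_simp
  linear_combination 2 * exp (-x) * hinv

lemma lipschitzWith_tanh : LipschitzWith 1 tanh := by
  refine LipschitzWith.of_dist_le_mul fun a b ↦ ?_
  have hσ := lipschitzWith_sigmoid.dist_le_mul (2 * a) (2 * b)
  simp only [dist_eq, NNReal.coe_inv, NNReal.coe_ofNat, NNReal.coe_one] at hσ ⊢
  calc |tanh a - tanh b| = 2 * |sigmoid (2 * a) - sigmoid (2 * b)| := by
        rw [tanh_eq_two_mul_sigmoid_sub_one, tanh_eq_two_mul_sigmoid_sub_one, ← abs_two,
          ← abs_mul]
        ring_nf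
    _ ≤ 2 * (4⁻¹ * |2 * a - 2 * b|) := by gcongr
    _ = 1 * |a - b| := by rw [← mul_sub, abs_mul, abs_two]; ring

end Real

theorem sigmoid_eq_real_sigmoid : sigmoid = Real.sigmoid := by
  funext x; rw [sigmoid, Real.sigmoid_def, one_div]

theorem abs_mul_sub_mul_le_of_lipschitzWith {α β : Type*} [PseudoMetricSpace α]
    [PseudoMetricSpace β] {f : α → ℝ} {g : β → ℝ} {Kf Kg : ℝ≥0} {Mf Mg : ℝ}
    (hf : LipschitzWith Kf f) (hg : LipschitzWith Kg g) (hfM : ∀ x, |f x| ≤ Mf)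
    (hgM : ∀ y, |g y| ≤ Mg) (x x' : α) (y y' : β) :
    |f x' * g y' - f x * g y| ≤ Mg * Kf * dist x' x + Mf * Kg * dist y' y := by
  have hsplit : f x' * g y' - f x * g y = f x' * (g y' - g y) + g y * (f x' - f x) := by ring
  have hf' := hf.dist_le_mul x' x
  have hg' := hg.dist_le_mul y' y
  rw [Real.dist_eq] at hf' hg'
  calc |f x' * g y' - f x * g y|
      ≤ |f x'| * |g y' - g y| + |g y| * |f x' - f x| := by
        rw [hsplit, ← abs_mul, ← abs_mul]; exact abs_add_le _ _
    _ ≤ Mf * (Kg * dist y' y) + Mg * (Kf * dist x' x) :=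
        add_le_add (mul_le_mul (hfM x') hg' (abs_nonneg _) ((abs_nonneg _).trans (hfM x)))
          (mul_le_mul (hgM y) hf' (abs_nonneg _) ((abs_nonneg _).trans (hgM y)))
    _ = _ := by ring

/-- `G(x,y) = tanh(x)·σ(y)` is Lipschitz on `ℝ²` with constant `√(17/16)`
with respect to the Euclidean norm: for all `x, y, x̂, ŷ`,
`|tanh(x̂)·σ(ŷ) − tanh(x)·σ(y)|² ≤ (17/16)·((x̂ − x)² + (ŷ − y)²)`. -/
theorem tanh_mul_sigmoid_lipschitz :
    (∀ x y xhat yhat : ℝ,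
      |Real.tanh xhat * sigmoid yhat - Real.tanh x * sigmoid y| ^ 2 ≤
        (17 / 16) * ((xhat - x) ^ 2 + (yhat - y) ^ 2)) ∧
    LipschitzWith ⟨Real.sqrt (17 / 16), Real.sqrt_nonneg _⟩
      (fun p : EuclideanSpace ℝ (Fin 2) => Real.tanh (p 0) * sigmoid (p 1)) := by
  have hbound (x y xhat yhat : ℝ) :
      |Real.tanh xhat * sigmoid yhat - Real.tanh x * sigmoid y| ≤
        |xhat - x| + 4⁻¹ * |yhat - y| := by
    simpa [sigmoid_eq_real_sigmoid, Real.dist_eq] using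
      abs_mul_sub_mul_le_of_lipschitzWith Real.lipschitzWith_tanh Real.lipschitzWith_sigmoid
        (fun x ↦ (Real.abs_tanh_lt_one x).le)
        (fun y ↦ (abs_of_pos (Real.sigmoid_pos y)).trans_le (Real.sigmoid_le_one y)) x xhat y yhat
  have hsq (x y xhat yhat : ℝ) :
      |Real.tanh xhat * sigmoid yhat - Real.tanh x * sigmoid y| ^ 2 ≤
        (17 / 16) * ((xhat - x) ^ 2 + (yhat - y) ^ 2) := by
    rw [← sq_abs (xhat - x), ← sq_abs (yhat - y)]
    calc _ ≤ (|xhat - x| + 4⁻¹ * |yhat - y|) ^ 2 := by gcongr; exact hbound x y xhat yhat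
      _ ≤ (17 / 16) * (|xhat - x| ^ 2 + |yhat - y| ^ 2) := by
        nlinarith [sq_nonneg (4⁻¹ * |xhat - x| - |yhat - y|)]
  refine ⟨hsq, LipschitzWith.of_dist_le_mul fun p q ↦ ?_⟩
  change dist _ _ ≤ √(17 / 16) * dist p q
  rw [← pow_le_pow_iff_left₀ dist_nonneg (by positivity) two_ne_zero, mul_pow,
    Real.sq_sqrt (by norm_num), EuclideanSpace.dist_sq_eq, Fin.sum_univ_two]
  simpa only [Real.dist_eq, sq_abs] using hsq (q 0) (q 1) (p 0) (p 1)
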